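/- arXiv:2504.19241 — 7 statements merged into one kernel-verified Lean document; each statement's English description precedes it below -/
import Mathlib

section
/- Let R be an abelian semi-regular ring whose Jacobson radical J(R) is nilpotent. If elements a_0, a_1, …, a_n of R generate R as a two-sided ideal (i.e., the two-sided ideal ∑_{i=0}^n R a_i R equals R), then they already generate R as a left ideal (i.e., the left ideal ∑_{i=0}^n R a_i equals R). -/
/-- A ring is *abelian* if every idempotent is central. -/
def IsAbelianRing (R : Type*) [Ring R] : Prop :=
  ∀ e : R, IsIdempotentElem e → ∀ a : R, e * a = a * e

/-- A ring `R` is *semi-regular* if `R/J(R)` is von Neumann regular (for every `a` there is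
`b` with `a - a*b*a ∈ J(R)`) and idempotents lift modulo the Jacobson radical `J(R)`. -/
def IsSemiregularRing (R : Type*) [Ring R] : Prop :=
  (∀ a : R, ∃ b : R, a - a * b * a ∈ (⊥ : Ideal R).jacobson) ∧
  ∀ a : R, a * a - a ∈ (⊥ : Ideal R).jacobson →
    ∃ e : R, IsIdempotentElem e ∧ e - a ∈ (⊥ : Ideal R).jacobson

/-- The Jacobson radical `J(R)` is nilpotent: there is `n > 0` such that every product of `n`
elements of `J(R)` vanishes (i.e. `J(R)^n = 0`). -/
def JacobsonNilpotent (R : Type*) [Ring R] : Prop :=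
  ∃ n : ℕ, 0 < n ∧ ∀ l : List R, l.length = n →
    (∀ x ∈ l, x ∈ (⊥ : Ideal R).jacobson) → l.prod = 0

/-! If `x ≡ x * b * x` modulo `J(R)` and `e` is an idempotent lifting `b * x`, then `x ≡ x * e`
and `e ∈ R x + J(R)`; as `e` is central, `x * r ≡ x * r * e ∈ R x + J(R)`. So `L + J(R)` is a
two-sided ideal, where `L` is the left ideal spanned by the generators; it contains them, hence is
`R`, and then `L = R` because `J(R)` lies in every maximal left ideal. -/

namespace Ideal

variable {R : Type*} [Ring R]

theorem eq_top_of_sup_jacobson_bot_eq_top {I : Ideal R} (h : I ⊔ (⊥ : Ideal R).jacobson = ⊤) :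
    I = ⊤ := by
  by_contra hI
  obtain ⟨M, hM, hIM⟩ := I.exists_le_maximal hI
  have hJM : (⊥ : Ideal R).jacobson ≤ M := sInf_le ⟨bot_le, hM⟩
  exact hM.ne_top (top_le_iff.mp (h ▸ sup_le hIM hJM))

theorem mul_mem_of_mem_span {S : Set R} {K : Ideal R} (hS : ∀ s ∈ S, ∀ r, s * r ∈ K)
    {x : R} (hx : x ∈ span S) (r : R) : x * r ∈ K := by
  have hmap : Submodule.map (LinearMap.mulRight R r) (span S) ≤ K := by
    rw [span, Submodule.map_span, Submodule.span_le]
    rintro _ ⟨s, hs, rfl⟩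
    exact hS s hs r
  exact hmap (Submodule.mem_map_of_mem (f := LinearMap.mulRight R r) hx)

theorem isTwoSided_sup_of_mul_mem {S : Set R} {J : Ideal R} [J.IsTwoSided]
    (hS : ∀ s ∈ S, ∀ r, s * r ∈ span S ⊔ J) : (span S ⊔ J).IsTwoSided where
  mul_mem_of_left {x} r hx := by
    obtain ⟨y, hy, j, hj, rfl⟩ := Submodule.mem_sup.mp hx
    rw [add_mul]
    exact add_mem (mul_mem_of_mem_span hS hy r) (Submodule.mem_sup_right (J.mul_mem_right r hj))

end Ideal

namespace IsSemiregularRing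

variable {R : Type*} [Ring R]

theorem exists_isIdempotentElem (hsr : IsSemiregularRing R) (x : R) :
    ∃ e : R, IsIdempotentElem e ∧ x - x * e ∈ (⊥ : Ideal R).jacobson ∧
      e ∈ Ideal.span {x} ⊔ (⊥ : Ideal R).jacobson := by
  obtain ⟨b, hb⟩ := hsr.1 x
  have hbx : b * x * (b * x) - b * x ∈ (⊥ : Ideal R).jacobson := by
    have : b * x * (b * x) - b * x = -(b * (x - x * b * x)) := by noncomm_ring
    exact this ▸ neg_mem (Ideal.mul_mem_left _ _ hb)
  obtain ⟨e, he, heb⟩ := hsr.2 (b * x) hbx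
  refine ⟨e, he, ?_, ?_⟩
  · have : x - x * e = (x - x * b * x) - x * (e - b * x) := by noncomm_ring
    exact this ▸ sub_mem hb (Ideal.mul_mem_left _ _ heb)
  · have : e = b * x + (e - b * x) := by abel
    exact this ▸ add_mem
      (Submodule.mem_sup_left (Ideal.mul_mem_left _ _ (Ideal.mem_span_singleton_self x)))
      (Submodule.mem_sup_right heb)

theorem mul_mem_span_singleton_sup_jacobson (hsr : IsSemiregularRing R) (hab : IsAbelianRing R)
    (x r : R) : x * r ∈ Ideal.span {x} ⊔ (⊥ : Ideal R).jacobson := by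
  obtain ⟨e, he, hxe, hex⟩ := hsr.exists_isIdempotentElem x
  have : x * r = (x - x * e) * r + x * r * e := by
    rw [mul_assoc x r e, ← hab e he r]; noncomm_ring
  rw [this]
  exact add_mem (Submodule.mem_sup_right (Ideal.mul_mem_right r _ hxe)) (Ideal.mul_mem_left _ _ hex)

theorem span_eq_top_of_twoSidedSpan_eq_top (hsr : IsSemiregularRing R) (hab : IsAbelianRing R)
    {S : Set R} (h : TwoSidedIdeal.span S = ⊤) : Ideal.span S = ⊤ := by
  have hS : ∀ s ∈ S, ∀ r, s * r ∈ Ideal.span S ⊔ (⊥ : Ideal R).jacobson := fun s hs r =>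
    sup_le_sup_right (Ideal.span_mono (Set.singleton_subset_iff.mpr hs)) _
      (hsr.mul_mem_span_singleton_sup_jacobson hab s r)
  have := Ideal.isTwoSided_sup_of_mul_mem hS
  have hle : TwoSidedIdeal.span S ≤ (Ideal.span S ⊔ (⊥ : Ideal R).jacobson).toTwoSided :=
    TwoSidedIdeal.span_le.mpr fun s hs =>
      Ideal.mem_toTwoSided.mpr (Submodule.mem_sup_left (Ideal.subset_span hs))
  refine Ideal.eq_top_of_sup_jacobson_bot_eq_top ((Ideal.eq_top_iff_one _).mpr ?_)
  exact Ideal.mem_toTwoSided.mp (hle (h ▸ trivial))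

end IsSemiregularRing

theorem twoSidedSpan_eq_top_imp_leftSpan_eq_top_general (R : Type*) [Ring R]
    (hab : IsAbelianRing R) (hsr : IsSemiregularRing R)
    (n : ℕ) (a : Fin (n + 1) → R)
    (h : TwoSidedIdeal.span (Set.range a) = ⊤) :
    Ideal.span (Set.range a) = ⊤ :=
  hsr.span_eq_top_of_twoSidedSpan_eq_top hab h

/-- If `R` is an abelian semi-regular ring with nilpotent Jacobson radical and the elements
`a 0, …, a n` generate `R` as a two-sided ideal, then they generate `R` as a left ideal. -/
theorem twoSidedSpan_eq_top_imp_leftSpan_eq_top (R : Type*) [Ring R]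
    (hab : IsAbelianRing R) (hsr : IsSemiregularRing R) (hnil : JacobsonNilpotent R)
    (n : ℕ) (a : Fin (n + 1) → R)
    (h : TwoSidedIdeal.span (Set.range a) = ⊤) :
    Ideal.span (Set.range a) = ⊤ :=
  twoSidedSpan_eq_top_imp_leftSpan_eq_top_general R hab hsr n a h
end

section
/- Every abelian semi-regular ring is quasi-duo; that is, in an abelian semi-regular ring R, every maximal right ideal of R is a two-sided ideal, and every maximal left ideal of R is a two-sided ideal. -/
/-!
Let `a` lie in a maximal left ideal `M`. Regularity modulo `J(R)` gives `b` with `a ≡ a b a`, so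
`b a` is idempotent modulo `J(R)` and lifts to an idempotent `e`. Since `J(R) ⊆ M`, `e ∈ M`, and
`a ≡ a e`; as `e` is central, `a r ≡ a e r = a r e ∈ M`. Maximal right ideals are maximal left
ideals of `Rᵐᵒᵖ`, which is again abelian and semi-regular because `J(Rᵐᵒᵖ) = J(R)ᵒᵖ`:
by Jacobson's lemma (`1 - x y` is a unit iff `1 - y x` is) both are cut out by the same unit
condition.
-/

open MulOpposite

section

variable {R : Type*} [Ring R]

theorem isUnit_one_sub_mul_comm (a b : R) : IsUnit (1 - a * b) ↔ IsUnit (1 - b * a) := by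
  simpa [spectrum.mem_iff] using
    (spectrum.unit_mem_mul_comm (R := ℤ) (a := a) (b := b) (r := 1)).not

namespace Ideal

theorem isUnit_one_sub_of_mem_jacobson_bot {z : R} (hz : z ∈ (⊥ : Ideal R).jacobson) :
    IsUnit (1 - z) := by
  have left_inv : ∀ z ∈ (⊥ : Ideal R).jacobson, ∃ w, w * (1 - z) = 1 := fun z hz ↦ by
    obtain ⟨w, hw⟩ := mem_jacobson_iff.mp hz (-1)
    rw [mem_bot] at hw
    exact ⟨w, by rw [← sub_eq_zero, ← hw]; noncomm_ring⟩
  obtain ⟨w, hw⟩ := left_inv z hz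
  -- `w = 1 - (-(w * z))` is itself of the form `1 - j` with `j ∈ J`, hence left invertible.
  obtain ⟨v, hv⟩ := left_inv (-(w * z)) (neg_mem (mul_mem_left _ w hz))
  have hv' : v * w = 1 := by rwa [show 1 - -(w * z) = w by rw [← hw]; noncomm_ring] at hv
  have hwz : (1 - z) * w = 1 := by
    calc (1 - z) * w = v * w * (1 - z) * w := by rw [hv', one_mul]
      _ = v * w := by rw [mul_assoc v, hw, mul_one]
      _ = 1 := hv'
  exact ⟨⟨1 - z, w, hwz, hw⟩, rfl⟩

theorem mem_jacobson_bot_iff_forall_isUnit_one_sub_mul {x : R} :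
    x ∈ (⊥ : Ideal R).jacobson ↔ ∀ y, IsUnit (1 - y * x) := by
  refine ⟨fun hx y ↦ isUnit_one_sub_of_mem_jacobson_bot (mul_mem_left _ y hx), fun h ↦ ?_⟩
  rw [mem_jacobson_iff]
  intro y
  obtain ⟨u, hu⟩ := h (-y)
  refine ⟨↑u⁻¹, (mem_bot).mpr ?_⟩
  calc (↑u⁻¹ : R) * y * x + ↑u⁻¹ - 1 = ↑u⁻¹ * (1 - -y * x) - 1 := by noncomm_ring
    _ = 0 := by rw [← hu, Units.inv_mul, sub_self]

theorem mem_jacobson_bot_op_iff {x : Rᵐᵒᵖ} :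
    x ∈ (⊥ : Ideal Rᵐᵒᵖ).jacobson ↔ x.unop ∈ (⊥ : Ideal R).jacobson := by
  simp only [mem_jacobson_bot_iff_forall_isUnit_one_sub_mul, ← isUnit_one_sub_mul_comm x.unop,
    MulOpposite.forall]
  refine forall_congr' fun y ↦ ?_
  rw [← isUnit_op (m := 1 - x.unop * y), op_sub, op_one, op_mul, op_unop]

end Ideal

theorem IsAbelianRing.op (hab : IsAbelianRing R) : IsAbelianRing Rᵐᵒᵖ := fun e he x ↦
  unop_injective (hab e.unop (congrArg unop he) x.unop).symm

theorem IsSemiregularRing.op (hsr : IsSemiregularRing R) : IsSemiregularRing Rᵐᵒᵖ := by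
  refine ⟨fun a ↦ ?_, fun a ha ↦ ?_⟩
  · obtain ⟨b, hb⟩ := hsr.1 a.unop
    exact ⟨MulOpposite.op b, by simpa [Ideal.mem_jacobson_bot_op_iff, mul_assoc] using hb⟩
  · obtain ⟨e, he, hea⟩ := hsr.2 a.unop (by simpa [Ideal.mem_jacobson_bot_op_iff] using ha)
    exact ⟨MulOpposite.op e, congrArg MulOpposite.op he,
      by simpa [Ideal.mem_jacobson_bot_op_iff] using hea⟩

theorem IsSemiregularRing.exists_isIdempotentElem_sub_mul_mem_jacobson
    (hsr : IsSemiregularRing R) (a : R) :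
    ∃ b e : R, IsIdempotentElem e ∧ e - b * a ∈ (⊥ : Ideal R).jacobson ∧
      a - a * e ∈ (⊥ : Ideal R).jacobson := by
  obtain ⟨b, hb⟩ := hsr.1 a
  have hba : b * a * (b * a) - b * a ∈ (⊥ : Ideal R).jacobson := by
    rw [show b * a * (b * a) - b * a = -(b * (a - a * b * a)) by noncomm_ring]
    exact neg_mem (Ideal.mul_mem_left _ b hb)
  obtain ⟨e, he, heb⟩ := hsr.2 (b * a) hba
  refine ⟨b, e, he, heb, ?_⟩
  rw [show a - a * e = a - a * b * a - a * (e - b * a) by noncomm_ring]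
  exact sub_mem hb (Ideal.mul_mem_left _ a heb)

theorem IsAbelianRing.mul_mem_of_isMaximal (hab : IsAbelianRing R)
    (hsr : IsSemiregularRing R) {M : Ideal R} (hM : M.IsMaximal) {a : R} (ha : a ∈ M) (r : R) :
    a * r ∈ M := by
  obtain ⟨b, e, he, heb, hae⟩ := hsr.exists_isIdempotentElem_sub_mul_mem_jacobson a
  have hJM : (⊥ : Ideal R).jacobson ≤ M := sInf_le ⟨bot_le, hM⟩
  have heM : e ∈ M := by simpa using M.add_mem (hJM heb) (M.mul_mem_left b ha)
  have hsplit : a * r = (a - a * e) * r + a * r * e := by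
    rw [sub_mul, mul_assoc a e, hab e he r]; noncomm_ring
  rw [hsplit]
  exact M.add_mem (hJM (Ideal.mul_mem_right r _ hae)) (M.mul_mem_left _ heM)

end

/-- Abelian semi-regular rings are quasi-duo: every maximal right ideal (viewed as a maximal
left ideal of `Rᵐᵒᵖ`) is two-sided, and every maximal left ideal is two-sided. -/
theorem abelian_semiregular_quasiDuo (R : Type*) [Ring R]
    (hab : IsAbelianRing R) (hsr : IsSemiregularRing R) :
    (∀ M : Ideal Rᵐᵒᵖ, M.IsMaximal →
      ∀ a : R, MulOpposite.op a ∈ M → ∀ r : R, MulOpposite.op (r * a) ∈ M) ∧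
    (∀ M : Ideal R, M.IsMaximal → ∀ a ∈ M, ∀ r : R, a * r ∈ M) := by
  refine ⟨fun M hM a ha r ↦ ?_, fun M hM a ha r ↦ hab.mul_mem_of_isMaximal hsr hM ha r⟩
  rw [op_mul]
  exact hab.op.mul_mem_of_isMaximal hsr.op hM ha (op r)
end

section
/- Let Γ be a linearly ordered cancellative additive commutative monoid in which addition is strictly monotone, and let R be an abelian semi-regular ring with J(R) nilpotent. Let f and g be elements of the generalized power series ring R[[Γ]] (the Hahn series ring over Γ with coefficients in R) such that f g = 0 and g ≠ 0. If for every maximal right ideal M of R the set of coefficients { f(s) : s ∈ Γ } of f is not contained in M, then every coefficient of g lies in J(R). -/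
/-!
Modulo `J = J(R)` an abelian semi-regular ring is reduced: if `x² ∈ J`, regularity gives `b` with
`x - xbx ∈ J`, the element `bx` is idempotent mod `J` and lifts to a central idempotent `e`, and
then `x ≡ xe = ex ≡ bx² ≡ 0`. In a ring that is reduced mod `J`, `ab ∈ J` forces `ba ∈ J` and
`arb ∈ J`, and a McCoy-type argument shows that `f * g = 0` puts every product
`f.coeff u * g.coeff v` in `J`: otherwise take such a pair with `u + v` least and then `u` least;
multiplying the coefficient of `f * g` at `u + v` on the right by `f.coeff u` leaves, modulo `J`,
only `f.coeff u * g.coeff v * f.coeff u`. Finally, since the coefficients of `f` lie in no maximal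
right ideal, `1 = ∑ f.coeff sᵢ * rᵢ`, so `g.coeff t = ∑ f.coeff sᵢ * rᵢ * g.coeff t ∈ J`.
-/

/-- `R / J(R)` is reduced. -/
def IsJacobsonReduced (R : Type*) [Ring R] : Prop :=
  ∀ x : R, x * x ∈ (⊥ : Ideal R).jacobson → x ∈ (⊥ : Ideal R).jacobson

section

variable {R : Type*} [Ring R]

theorem IsAbelianRing.isJacobsonReduced (hab : IsAbelianRing R) (hsr : IsSemiregularRing R) :
    IsJacobsonReduced R := by
  intro x hx
  set J := (⊥ : Ideal R).jacobson
  obtain ⟨b, hb⟩ := hsr.1 x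
  have hbx : b * x * (b * x) - b * x ∈ J := by
    have h : b * x * (b * x) - b * x = -(b * (x - x * b * x)) := by noncomm_ring
    rw [h]
    exact J.neg_mem (J.mul_mem_left b hb)
  obtain ⟨e, he, heb⟩ := hsr.2 (b * x) hbx
  have hex : e * x ∈ J := by
    have h : e * x = (e - b * x) * x + b * (x * x) := by noncomm_ring
    rw [h]
    exact J.add_mem (J.mul_mem_right x heb) (J.mul_mem_left b hx)
  have hxe : x - x * e ∈ J := by
    have h : x - x * e = (x - x * b * x) - x * (e - b * x) := by noncomm_ring
    rw [h]
    exact J.sub_mem hb (J.mul_mem_left x heb)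
  have h : x = (x - x * e) + e * x := by rw [hab e he x]; abel
  rw [h]
  exact J.add_mem hxe hex

namespace IsJacobsonReduced

theorem mul_mem_jacobson_swap (hred : IsJacobsonReduced R) {a b : R}
    (h : a * b ∈ (⊥ : Ideal R).jacobson) : b * a ∈ (⊥ : Ideal R).jacobson := by
  apply hred
  simpa only [mul_assoc] using
    Ideal.mul_mem_right a _ (Ideal.mul_mem_left _ b h)

theorem mul_mul_mem_jacobson (hred : IsJacobsonReduced R) {a b : R}
    (h : a * b ∈ (⊥ : Ideal R).jacobson) (r : R) : a * r * b ∈ (⊥ : Ideal R).jacobson := by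
  apply hred
  simpa only [mul_assoc] using
    Ideal.mul_mem_left _ (a * r) (Ideal.mul_mem_right (r * b) _ (hred.mul_mem_jacobson_swap h))

end IsJacobsonReduced

theorem exists_finset_sum_mul_eq_one {ι : Type*} (a : ι → R)
    (ha : ∀ M : Ideal Rᵐᵒᵖ, M.IsMaximal → ¬ ∀ i, MulOpposite.op (a i) ∈ M) :
    ∃ (s : Finset ι) (r : ι → R), ∑ i ∈ s, a i * r i = 1 := by
  have hspan : Ideal.span (Set.range fun i => MulOpposite.op (a i)) = ⊤ := by
    by_contra h
    obtain ⟨M, hM, hle⟩ := Ideal.exists_le_maximal _ h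
    exact ha M hM fun i => hle (Ideal.subset_span ⟨i, rfl⟩)
  have h1 : (1 : Rᵐᵒᵖ) ∈ Ideal.span (Set.range fun i => MulOpposite.op (a i)) :=
    hspan ▸ Submodule.mem_top
  rw [Ideal.span, Finsupp.mem_span_range_iff_exists_finsupp] at h1
  obtain ⟨c, hc⟩ := h1
  refine ⟨c.support, fun i => (c i).unop, ?_⟩
  simpa [Finsupp.sum] using congrArg MulOpposite.unop hc

theorem IsJacobsonReduced.mem_jacobson_of_forall_mul_mem (hred : IsJacobsonReduced R)
    {ι : Type*} (a : ι → R)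
    (ha : ∀ M : Ideal Rᵐᵒᵖ, M.IsMaximal → ¬ ∀ i, MulOpposite.op (a i) ∈ M) {x : R}
    (hx : ∀ i, a i * x ∈ (⊥ : Ideal R).jacobson) : x ∈ (⊥ : Ideal R).jacobson := by
  obtain ⟨s, r, hsum⟩ := exists_finset_sum_mul_eq_one a ha
  have hx' : x = ∑ i ∈ s, a i * r i * x := by rw [← Finset.sum_mul, hsum, one_mul]
  rw [hx']
  exact Ideal.sum_mem _ fun i _ => hred.mul_mul_mem_jacobson (hx i) (r i)

namespace HahnSeries

variable {Γ : Type*} [AddCommMonoid Γ] [LinearOrder Γ] [IsOrderedCancelAddMonoid Γ]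

theorem coeff_mul_coeff_mem_jacobson (hred : IsJacobsonReduced R) {f g : HahnSeries Γ R}
    (hfg : f * g = 0) (u v : Γ) : f.coeff u * g.coeff v ∈ (⊥ : Ideal R).jacobson := by
  set J := (⊥ : Ideal R).jacobson
  by_contra huv
  have hsupp : ∀ {u v}, f.coeff u * g.coeff v ∉ J → f.coeff u ≠ 0 ∧ g.coeff v ≠ 0 :=
    fun h => ⟨fun hu => h (by simp [hu]), fun hv => h (by simp [hv])⟩
  set T : Set Γ := {m | ∃ u v, u + v = m ∧ f.coeff u * g.coeff v ∉ J}
  have hT : T.IsWF := (f.isPWO_support.add g.isPWO_support).isWF.mono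
    fun _ ⟨u, v, huv, h⟩ => ⟨u, (hsupp h).1, v, (hsupp h).2, huv⟩
  have hTne : T.Nonempty := ⟨u + v, u, v, rfl, huv⟩
  set m := hT.min hTne
  set U : Set Γ := {u | ∃ v, u + v = m ∧ f.coeff u * g.coeff v ∉ J}
  have hU : U.IsWF := f.isPWO_support.isWF.mono fun _ ⟨_, _, h⟩ => (hsupp h).1
  have hUne : U.Nonempty := hT.min_mem hTne
  obtain ⟨v₀, huv₀, hbad⟩ := hU.min_mem hUne
  set u₀ := hU.min hUne
  have hrest : ∀ p ∈ Finset.antidiagonal f.isPWO_support g.isPWO_support m, p ≠ (u₀, v₀) →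
      f.coeff p.1 * g.coeff p.2 * f.coeff u₀ ∈ J := by
    rintro ⟨u', v'⟩ hp hne'
    obtain ⟨-, -, huv' : u' + v' = m⟩ := Finset.mem_antidiagonal.mp hp
    rcases lt_trichotomy u' u₀ with hlt | rfl | hgt
    · exact Ideal.mul_mem_right _ _ (not_not.mp fun h => hU.not_lt_min hUne ⟨v', huv', h⟩ hlt)
    · exact (hne' (Prod.ext rfl (add_left_cancel (huv'.trans huv₀.symm)))).elim
    · have hlt : u₀ + v' < m := huv' ▸ add_lt_add_of_lt_of_le hgt le_rfl
      have h : f.coeff u₀ * g.coeff v' ∈ J :=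
        not_not.mp fun h => hT.not_lt_min hTne ⟨u₀, v', rfl, h⟩ hlt
      simpa only [mul_assoc] using J.mul_mem_left _ (hred.mul_mem_jacobson_swap h)
  have hsum : ∑ p ∈ Finset.antidiagonal f.isPWO_support g.isPWO_support m,
      f.coeff p.1 * g.coeff p.2 * f.coeff u₀ ∈ J := by
    rw [← Finset.sum_mul, ← coeff_mul, hfg, coeff_zero, zero_mul]
    exact J.zero_mem
  have hmem : (u₀, v₀) ∈ Finset.antidiagonal f.isPWO_support g.isPWO_support m :=
    Finset.mem_antidiagonal.mpr ⟨(hsupp hbad).1, (hsupp hbad).2, huv₀⟩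
  rw [← Finset.add_sum_erase _ _ hmem] at hsum
  have hdiag := (J.add_mem_iff_left (J.sum_mem fun p hp => hrest p
    (Finset.mem_erase.mp hp).2 (Finset.mem_erase.mp hp).1)).mp hsum
  exact hbad (hred _ (by simpa only [mul_assoc] using J.mul_mem_right (g.coeff v₀) hdiag))

end HahnSeries

end

theorem coeff_mem_jacobson_of_mul_eq_zero_general (Γ R : Type*)
    [AddCommMonoid Γ] [LinearOrder Γ] [IsOrderedCancelAddMonoid Γ] [Ring R]
    (hab : IsAbelianRing R) (hsr : IsSemiregularRing R)
    (f g : HahnSeries Γ R) (hfg : f * g = 0)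
    (hf : ∀ M : Ideal Rᵐᵒᵖ, M.IsMaximal → ¬ (∀ s : Γ, MulOpposite.op (f.coeff s) ∈ M)) :
    ∀ s : Γ, g.coeff s ∈ (⊥ : Ideal R).jacobson := by
  have hred := hab.isJacobsonReduced hsr
  exact fun t => hred.mem_jacobson_of_forall_mul_mem f.coeff hf
    fun s => HahnSeries.coeff_mul_coeff_mem_jacobson hred hfg s t

/-- Let `Γ` be a linearly ordered, cancellative, strictly monotone additive commutative
monoid and `R` an abelian semi-regular ring with `J(R)` nilpotent.  If `f * g = 0` with
`g ≠ 0` in the generalized power series (Hahn series) ring `R[[Γ]]`, and the set of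
coefficients of `f` is not contained in any maximal right ideal of `R`, then every
coefficient of `g` lies in `J(R)`. -/
theorem coeff_mem_jacobson_of_mul_eq_zero (Γ R : Type*)
    [AddCommMonoid Γ] [LinearOrder Γ] [IsOrderedCancelAddMonoid Γ] [Ring R]
    (hab : IsAbelianRing R) (hsr : IsSemiregularRing R) (hnil : JacobsonNilpotent R)
    (f g : HahnSeries Γ R) (hfg : f * g = 0) (hg : g ≠ 0)
    (hf : ∀ M : Ideal Rᵐᵒᵖ, M.IsMaximal → ¬ (∀ s : Γ, MulOpposite.op (f.coeff s) ∈ M)) :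
    ∀ s : Γ, g.coeff s ∈ (⊥ : Ideal R).jacobson :=
  coeff_mem_jacobson_of_mul_eq_zero_general Γ R hab hsr f g hfg hf
end

section
/- Let Γ be a linearly ordered cancellative additive commutative monoid in which addition is strictly monotone, and let R be an abelian semi-regular ring with J(R) nilpotent. Then the generalized power series ring R[[Γ]] (the Hahn series ring over Γ with coefficients in R) is right McCoy over R: whenever f, g are non-zero elements of R[[Γ]] with f g = 0, there exists a non-zero element c ∈ R such that f(s) · c = 0 for every s ∈ Γ (equivalently, f · c = 0 in R[[Γ]]). -/
theorem Nat.exists_and_not_succ {P : ℕ → Prop} {n : ℕ} (h₀ : P 0) (hn : ¬P n) :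
    ∃ k, P k ∧ ¬P (k + 1) := by
  by_contra! h
  exact hn (Nat.rec h₀ h n)

theorem Finset.mem_of_sum_eq_zero {ι M A : Type*} [AddCommGroup M] [SetLike A M]
    [AddSubgroupClass A M] {L : A} [DecidableEq ι] {s : Finset ι} {F : ι → M} {i : ι}
    (hi : i ∈ s) (hsum : ∑ j ∈ s, F j = 0) (hF : ∀ j ∈ s, j ≠ i → F j ∈ L) : F i ∈ L := by
  rw [← Finset.sum_erase_add _ _ hi] at hsum
  rw [eq_neg_of_add_eq_zero_right hsum]
  exact neg_mem (sum_mem fun j hj => hF j (mem_of_mem_erase hj) (ne_of_mem_erase hj))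

namespace Ideal

variable {R : Type*} [Ring R] {I : Ideal R} {n : ℕ}

/-- The left ideal `I * (I * ⋯ * (I * ⊤))`, standing in for `I ^ k`: `Ideal R` carries no
monoid structure when `R` is noncommutative. -/
def leftPow (I : Ideal R) : ℕ → Ideal R
  | 0 => ⊤
  | k + 1 => I * I.leftPow k

theorem leftPow_succ (I : Ideal R) (k : ℕ) : I.leftPow (k + 1) = I * I.leftPow k :=
  rfl

theorem mul_mem_leftPow_succ {k : ℕ} {j x : R} (hj : j ∈ I) (hx : x ∈ I.leftPow k) :
    j * x ∈ I.leftPow (k + 1) :=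
  mul_mem_mul hj hx

theorem list_prod_mul_eq_zero_of_mem_leftPow
    (hI : ∀ l : List R, l.length = n → (∀ x ∈ l, x ∈ I) → l.prod = 0) {k : ℕ} {x : R}
    (hx : x ∈ I.leftPow k) {l : List R} (hl : ∀ y ∈ l, y ∈ I) (hlk : l.length + k = n) :
    l.prod * x = 0 := by
  induction k generalizing x l with
  | zero => rw [hI l hlk hl, zero_mul]
  | succ k ih =>
    refine Submodule.smul_induction_on (p := fun x => l.prod * x = 0) hx ?_ ?_
    · intro j hj y hy
      have := ih hy (l := l ++ [j]) (by simpa [or_imp, forall_and] using ⟨hl, hj⟩)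
        (by rw [List.length_append, List.length_singleton]; omega)
      rwa [List.prod_append, List.prod_singleton, mul_assoc] at this
    · intro y z hy hz
      rw [mul_add, hy, hz, add_zero]

theorem leftPow_eq_bot (hI : ∀ l : List R, l.length = n → (∀ x ∈ l, x ∈ I) → l.prod = 0) :
    I.leftPow n = ⊥ :=
  eq_bot_iff.mpr fun _ hx => by
    simpa using list_prod_mul_eq_zero_of_mem_leftPow hI hx (l := []) (by simp) (by simp)

theorem exists_mul_maximal_leftPow {ι : Type*} (hI : I.leftPow n = ⊥) {x : ι → R}
    (hx : x ≠ 0) :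
    ∃ r d, (∃ i, x i * r ≠ 0) ∧ (∀ i, x i * r ∈ I.leftPow d) ∧
      ∀ r', (∀ i, x i * r * r' ∈ I.leftPow (d + 1)) → ∀ i, x i * r * r' = 0 := by
  obtain ⟨d, ⟨r, hr, hrd⟩, hd⟩ := Nat.exists_and_not_succ (n := n)
    (P := fun d => ∃ r, (∃ i, x i * r ≠ 0) ∧ ∀ i, x i * r ∈ I.leftPow d)
    ⟨1, by simpa [funext_iff] using hx, fun _ => Submodule.mem_top⟩ (by simp [hI])
  refine ⟨r, d, hr, hrd, fun r' hr' => ?_⟩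
  by_contra! h
  exact hd ⟨r * r', by simpa [mul_assoc] using h, by simpa [mul_assoc] using hr'⟩

theorem exists_ne_zero_forall_mul_eq_zero {K : Ideal R} (hI : I.leftPow n = ⊥) (hK : K ≠ ⊥)
    {S : Set R} (hS : ∀ a ∈ S, ∀ x ∈ K, ∃ j ∈ I, a * x = j * x) :
    ∃ c ∈ K, c ≠ 0 ∧ ∀ a ∈ S, a * c = 0 := by
  obtain ⟨k, hk, hk₁⟩ := Nat.exists_and_not_succ (n := n)
    (P := fun k => K ⊓ I.leftPow k ≠ ⊥) (by simpa [leftPow] using hK) (by simp [hI])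
  obtain ⟨c, ⟨hcK, hck⟩, hc⟩ := Submodule.ne_bot_iff _ |>.mp hk
  refine ⟨c, hcK, hc, fun a ha => ?_⟩
  obtain ⟨j, hj, hac⟩ := hS a ha c hcK
  have : a * c ∈ K ⊓ I.leftPow (k + 1) :=
    ⟨K.mul_mem_left a hcK, hac ▸ mul_mem_leftPow_succ hj hck⟩
  simpa [not_not.mp hk₁] using this

end Ideal

/-- Modulo `I`, the central idempotent `e` generates the same left ideal as `a`. -/
structure IsCentralIdempotentGen {R : Type*} [Ring R] (I : Ideal R) (a e : R) : Prop where
  isIdempotentElem : IsIdempotentElem e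
  comm : ∀ r, e * r = r * e
  exists_sub_mul_mem : ∃ b, e - b * a ∈ I
  sub_mul_mem : a - e * a ∈ I

namespace IsCentralIdempotentGen

variable {R : Type*} [Ring R] {I : Ideal R} {a e : R}

theorem mul_eq_sub_mul_mul (h : IsCentralIdempotentGen I a e) {x : R} (hx : x * e = 0) :
    a * x = (a - e * a) * x := by
  rw [sub_mul, mul_assoc, h.comm, mul_assoc, hx, mul_zero, sub_zero]

theorem mul_mem_of_mul_mul_mem (h : IsCentralIdempotentGen I a e) {L L' : Ideal R}
    (hLL' : I * L ≤ L') {y : R} (hy : y ∈ L) (hay : e * (a * y) ∈ L') : e * y ∈ L' := by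
  obtain ⟨b, hb⟩ := h.exists_sub_mul_mem
  have hey : e * y = (e - b * a) * (e * y) + b * (e * (a * y)) :=
    calc e * y = e * e * y := by rw [h.isIdempotentElem.eq]
      _ = (e - b * a) * (e * y) + b * (e * (a * y)) := by
        rw [← mul_assoc e a, h.comm a]; noncomm_ring
  rw [hey]
  exact add_mem (hLL' (Ideal.mul_mem_mul hb (L.mul_mem_left e hy))) (L'.mul_mem_left b hay)

end IsCentralIdempotentGen

theorem IsSemiregularRing.exists_isCentralIdempotentGen {R : Type*} [Ring R]
    (hab : IsAbelianRing R) (hsr : IsSemiregularRing R) (a : R) :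
    ∃ e, IsCentralIdempotentGen (⊥ : Ideal R).jacobson a e := by
  obtain ⟨x, hx⟩ := hsr.1 a
  obtain ⟨e, he, hexa⟩ := hsr.2 (x * a) <| by
    rw [show x * a * (x * a) - x * a = -(x * (a - a * x * a)) by noncomm_ring]
    exact neg_mem (Ideal.mul_mem_left _ x hx)
  refine ⟨e, he, hab e he, ⟨x, hexa⟩, ?_⟩
  rw [hab e he a, show a - a * e = (a - a * x * a) - a * (e - x * a) by noncomm_ring]
  exact sub_mem hx (Ideal.mul_mem_left _ a hexa)

namespace HahnSeries

variable {Γ R : Type*} [AddCommMonoid Γ] [LinearOrder Γ] [IsOrderedCancelAddMonoid Γ] [Ring R]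
  {I L L' : Ideal R} {f h : HahnSeries Γ R} {E : Γ → R}

theorem idempotent_mul_coeff_mem (hfh : f * h = 0) (hLL' : I * L ≤ L')
    (hL : ∀ t, h.coeff t ∈ L)
    (hE : ∀ s ∈ f.support, IsCentralIdempotentGen I (f.coeff s) (E s)) {s₀ : Γ}
    (hs₀ : s₀ ∈ f.support) (hlt : ∀ u ∈ f.support, u < s₀ → ∀ v, h.coeff v * E u = 0)
    (t : Γ) : E s₀ * h.coeff t ∈ L' := by
  by_cases ht : h.coeff t = 0
  · simp [ht]
  refine h.isWF_support.induction (P := fun t => E s₀ * h.coeff t ∈ L') ht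
    fun t₀ ht₀ ih => ?_
  have he := hE s₀ hs₀
  refine he.mul_mem_of_mul_mul_mem hLL' (hL t₀) ?_
  have hsum : ∑ p ∈ Finset.antidiagonal f.isPWO_support h.isPWO_support (s₀ + t₀),
      E s₀ * (f.coeff p.1 * h.coeff p.2) = 0 := by
    rw [← Finset.mul_sum, ← coeff_mul, hfh, coeff_zero, mul_zero]
  refine Finset.mem_of_sum_eq_zero (i := (s₀, t₀))
    (Finset.mem_antidiagonal.mpr ⟨hs₀, ht₀, rfl⟩) hsum ?_
  rintro ⟨u, v⟩ huv hne
  obtain ⟨hu, hv, huv⟩ := Finset.mem_antidiagonal.mp huv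
  rcases lt_trichotomy u s₀ with hus | rfl | hsu
  · rw [(hE u hu).mul_eq_sub_mul_mul (hlt u hu hus v)]
    exact L'.mul_mem_left _ (hLL' (Ideal.mul_mem_mul (hE u hu).sub_mul_mem (hL v)))
  · exact (hne (Prod.ext rfl (add_left_cancel huv))).elim
  · have hvt : v < t₀ := lt_of_not_ge fun htv => (add_lt_add_of_lt_of_le hsu htv).ne' huv
    rw [← mul_assoc, he.comm, mul_assoc]
    exact L'.mul_mem_left _ (ih v hv hvt)

theorem coeff_mul_idempotent_eq_zero (hfh : f * h = 0) (hLL' : I * L ≤ L')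
    (hL : ∀ t, h.coeff t ∈ L)
    (hE : ∀ s ∈ f.support, IsCentralIdempotentGen I (f.coeff s) (E s))
    (hmax : ∀ r, (∀ t, h.coeff t * r ∈ L') → ∀ t, h.coeff t * r = 0) {s : Γ}
    (hs : s ∈ f.support) (t : Γ) : h.coeff t * E s = 0 := by
  revert t
  refine f.isWF_support.induction (P := fun s => ∀ t, h.coeff t * E s = 0) hs
    fun s₀ hs₀ ih => hmax _ fun t => ?_
  rw [← (hE s₀ hs₀).comm]
  exact idempotent_mul_coeff_mem hfh hLL' hL hE hs₀ ih t

end HahnSeries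

theorem hahnSeries_right_mccoy_general (Γ R : Type*)
    [AddCommMonoid Γ] [LinearOrder Γ] [IsOrderedCancelAddMonoid Γ] [Ring R]
    (hab : IsAbelianRing R) (hsr : IsSemiregularRing R) (hnil : JacobsonNilpotent R)
    (f g : HahnSeries Γ R) (hg : g ≠ 0) (hfg : f * g = 0) :
    ∃ c : R, c ≠ 0 ∧ ∀ s : Γ, f.coeff s * c = 0 := by
  obtain ⟨n, -, hn⟩ := hnil
  have hI := Ideal.leftPow_eq_bot hn
  choose E hE using hsr.exists_isCentralIdempotentGen hab
  obtain ⟨r, d, ⟨t₀, ht₀⟩, hdepth, hmax⟩ :=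
    Ideal.exists_mul_maximal_leftPow hI (HahnSeries.coeff_injective.ne hg)
  set h := g * HahnSeries.C r
  have hfh : f * h = 0 := by rw [← mul_assoc, hfg, zero_mul]
  have hkey : ∀ s ∈ f.support, ∀ t, h.coeff t * E (f.coeff s) = 0 := fun s hs =>
    HahnSeries.coeff_mul_idempotent_eq_zero hfh (Ideal.leftPow_succ _ d).ge
      (by simpa [h] using hdepth) (fun s _ => hE (f.coeff s)) (by simpa [h] using hmax) hs
  obtain ⟨c, -, hc, hfc⟩ := Ideal.exists_ne_zero_forall_mul_eq_zero hI
    (K := Ideal.span {h.coeff t₀}) (by simpa [h] using ht₀) (S := f.coeff '' f.support) <| by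
      rintro _ ⟨s, hs, rfl⟩ x hx
      obtain ⟨y, rfl⟩ := Ideal.mem_span_singleton'.mp hx
      exact ⟨_, (hE _).sub_mul_mem,
        (hE _).mul_eq_sub_mul_mul (by rw [mul_assoc, hkey s hs, mul_zero])⟩
  refine ⟨c, hc, fun s => ?_⟩
  by_cases hs : f.coeff s = 0
  · rw [hs, zero_mul]
  · exact hfc _ ⟨s, hs, rfl⟩

/-- Let `Γ` be a linearly ordered, cancellative, strictly monotone additive commutative
monoid and `R` an abelian semi-regular ring with `J(R)` nilpotent.  Then the Hahn series
ring `R[[Γ]]` is right McCoy over `R`: if `f * g = 0` with `f, g ≠ 0`, then some non-zero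
`c ∈ R` annihilates every coefficient of `f` on the right. -/
theorem hahnSeries_right_mccoy (Γ R : Type*)
    [AddCommMonoid Γ] [LinearOrder Γ] [IsOrderedCancelAddMonoid Γ] [Ring R]
    (hab : IsAbelianRing R) (hsr : IsSemiregularRing R) (hnil : JacobsonNilpotent R)
    (f g : HahnSeries Γ R) (hf : f ≠ 0) (hg : g ≠ 0) (hfg : f * g = 0) :
    ∃ c : R, c ≠ 0 ∧ ∀ s : Γ, f.coeff s * c = 0 :=
  hahnSeries_right_mccoy_general Γ R hab hsr hnil f g hg hfg
end

section
/- Let Γ be a linearly ordered cancellative additive commutative monoid in which addition is strictly monotone, and let R be an abelian semi-regular ring with J(R) nilpotent. Then the generalized power series ring R[[Γ]] (the Hahn series ring over Γ with coefficients in R) is left McCoy over R: whenever f, g are non-zero elements of R[[Γ]] with f g = 0, there exists a non-zero element c ∈ R such that c · g(s) = 0 for every s ∈ Γ (equivalently, c · g = 0 in R[[Γ]]). -/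
/-!
Semiregularity gives, for every coefficient `a = g(v)`, an idempotent `e_v` (central, since `R`
is abelian) and `b_v` with `a b_v ≡ e_v` and `a ≡ e_v a` modulo `J = J(R)`. Reading off the
coefficient of `f g = 0` at `u + v` and inducting on `v`, then on `u` (both well-founded on the
supports), one gets `f(u) e_v ∈ J^k` for every `k`, hence `f(u) e_v = 0`. As `J` is nilpotent,
some `c = f(u) x ≠ 0` satisfies `c J = 0`; then `c` kills both `e_v g(v)` and `g(v) - e_v g(v) ∈ J`.
-/

namespace Ideal

variable {R : Type*} [Ring R] {I : Ideal R} {n : ℕ}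

theorem pow_eq_bot_of_list_prod_eq_zero
    (h : ∀ l : List R, l.length = n → (∀ x ∈ l, x ∈ I) → l.prod = 0) : I ^ n = ⊥ := by
  suffices key : ∀ k, ∀ x ∈ I ^ k, ∀ l : List R, (∀ y ∈ l, y ∈ I) → k + l.length = n →
      x * l.prod = 0 by
    refine eq_bot_iff.2 fun x hx => ?_
    simpa using key n x hx [] (by simp) (by simp)
  intro k
  induction k with
  | zero => intro x _ l hl hlen; rw [h l (by omega) hl, mul_zero]
  | succ k ih =>
    intro x hx
    refine Submodule.mul_induction_on (C := fun x => ∀ l : List R, (∀ y ∈ l, y ∈ I) →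
      k + 1 + l.length = n → x * l.prod = 0) hx ?_ ?_
    · intro y hy j hj l hl hlen
      rw [mul_assoc, ← List.prod_cons]
      exact ih y hy (j :: l) (by simpa [hj] using hl) (by simp; omega)
    · intro x y hx hy l hl hlen
      rw [add_mul, hx l hl hlen, hy l hl hlen, add_zero]

theorem exists_mul_ne_zero_forall_mul_mul_eq_zero (hI : I ^ n = ⊥) {a : R} (ha : a ≠ 0) :
    ∃ x, a * x ≠ 0 ∧ ∀ j ∈ I, a * x * j = 0 := by
  by_contra! h
  have key : ∀ k, ∃ x ∈ I ^ k, a * x ≠ 0 := by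
    intro k
    induction k with
    | zero => exact ⟨1, by simp [Submodule.pow_zero, one_eq_top], by simpa⟩
    | succ k ih =>
      obtain ⟨x, hx, hax⟩ := ih
      obtain ⟨j, hj, haxj⟩ := h x hax
      exact ⟨x * j, mul_mem_mul hx hj, by rwa [← mul_assoc]⟩
  obtain ⟨x, hx, hax⟩ := key n
  rw [hI, mem_bot] at hx
  exact hax (by rw [hx, mul_zero])

end Ideal

theorem IsSemiregularRing.exists_isIdempotentElem_s9 {R : Type*} [Ring R] (hsr : IsSemiregularRing R)
    (a : R) : ∃ e b : R, IsIdempotentElem e ∧ a * b - e ∈ (⊥ : Ideal R).jacobson ∧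
      a - e * a ∈ (⊥ : Ideal R).jacobson := by
  obtain ⟨b, hb⟩ := hsr.1 a
  have hidem : a * b * (a * b) - a * b ∈ (⊥ : Ideal R).jacobson := by
    convert neg_mem (Ideal.mul_mem_right b _ hb) using 1
    noncomm_ring
  obtain ⟨e, he, hea⟩ := hsr.2 (a * b) hidem
  refine ⟨e, b, he, sub_mem_comm_iff.1 hea, ?_⟩
  convert sub_mem hb (Ideal.mul_mem_right a _ hea) using 1
  noncomm_ring

theorem lt_or_lt_of_add_eq_add_of_ne {Γ : Type*} [AddCommMonoid Γ] [LinearOrder Γ]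
    [IsOrderedCancelAddMonoid Γ] {u v u' v' : Γ} (h : u' + v' = u + v) (hne : (u', v') ≠ (u, v)) :
    v' < v ∨ u' < u := by
  rcases lt_trichotomy v' v with hv | rfl | hv
  · exact Or.inl hv
  · exact absurd (by rw [add_right_cancel h]) hne
  · refine Or.inr (lt_of_not_ge fun hu => ?_)
    exact (add_lt_add_of_le_of_lt hu hv).ne h.symm

namespace HahnSeries

variable {Γ R : Type*} [AddCommMonoid Γ] [Ring R]

theorem coeff_mul_coeff_mul_mem_of_mul_eq_zero [PartialOrder Γ] [IsOrderedCancelAddMonoid Γ]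
    {f g : HahnSeries Γ R} (hfg : f * g = 0) (I : Ideal R) {u v : Γ} (hu : u ∈ f.support)
    (hv : v ∈ g.support) (r : R)
    (h : ∀ u' ∈ f.support, ∀ v' ∈ g.support, u' + v' = u + v → (u', v') ≠ (u, v) →
      f.coeff u' * g.coeff v' * r ∈ I) :
    f.coeff u * g.coeff v * r ∈ I := by
  classical
  set A := Finset.antidiagonal f.isPWO_support g.isPWO_support (u + v)
  have hmem : (u, v) ∈ A := Finset.mem_antidiagonal.2 ⟨hu, hv, rfl⟩
  have hsum : ∑ ij ∈ A, f.coeff ij.1 * g.coeff ij.2 * r = 0 := by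
    rw [← Finset.sum_mul, ← coeff_mul, hfg, coeff_zero, zero_mul]
  have herase := Finset.sum_erase_eq_sub (f := fun ij => f.coeff ij.1 * g.coeff ij.2 * r) hmem
  rw [hsum, zero_sub] at herase
  rw [← neg_neg (f.coeff u * _ * r), ← herase]
  refine neg_mem (sum_mem fun ⟨u', v'⟩ hij => ?_)
  obtain ⟨hne, hij⟩ := Finset.mem_erase.1 hij
  obtain ⟨hu', hv', huv⟩ := Finset.mem_antidiagonal.1 hij
  exact h u' hu' v' hv' huv hne

theorem coeff_mul_mem_pow_of_mul_eq_zero [LinearOrder Γ] [IsOrderedCancelAddMonoid Γ]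
    {f g : HahnSeries Γ R} (hfg : f * g = 0) (I : Ideal R) [I.IsTwoSided] {e b : Γ → R}
    (he : ∀ v, IsIdempotentElem (e v)) (hec : ∀ v a, e v * a = a * e v)
    (hb : ∀ v, g.coeff v * b v - e v ∈ I) (hg : ∀ v, g.coeff v - e v * g.coeff v ∈ I) (k : ℕ) :
    ∀ v ∈ g.support, ∀ u, f.coeff u * e v ∈ I ^ k := by
  induction k with
  | zero => simp [Submodule.pow_zero, Ideal.one_eq_top]
  | succ k ih =>
    intro v hv
    refine g.isWF_support.induction (P := fun v => ∀ u, f.coeff u * e v ∈ I ^ (k + 1)) hv ?_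
    intro v hv ihv u
    by_cases hu0 : f.coeff u = 0
    · simp [hu0]
    refine f.isWF_support.induction (P := fun u => f.coeff u * e v ∈ I ^ (k + 1))
      ((f.mem_support u).2 hu0) ?_
    intro u hu ihu
    have hterm : f.coeff u * g.coeff v * e v ∈ I ^ (k + 1) := by
      refine coeff_mul_coeff_mul_mem_of_mul_eq_zero hfg _ hu hv _ fun u' hu' v' hv' huv hne => ?_
      rcases lt_or_lt_of_add_eq_add_of_ne huv hne with hvv | huu
      · have hsplit : f.coeff u' * g.coeff v' * e v = f.coeff u' * e v' * (g.coeff v' * e v) +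
            f.coeff u' * e v * (g.coeff v' - e v' * g.coeff v') := by
          calc f.coeff u' * g.coeff v' * e v
              = f.coeff u' * e v' * (g.coeff v' * e v) +
                  f.coeff u' * ((g.coeff v' - e v' * g.coeff v') * e v) := by noncomm_ring
            _ = _ := by rw [← hec v (g.coeff v' - e v' * g.coeff v'), ← mul_assoc (f.coeff u')]
        rw [hsplit]
        exact add_mem (Ideal.mul_mem_right _ _ (ihv v' hv' hvv u'))
          (Ideal.mul_mem_mul (ih v hv u') (hg v'))
      · rw [mul_assoc, ← hec, ← mul_assoc]
        exact Ideal.mul_mem_right _ _ (ihu u' hu' huu)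
    have hsplit : f.coeff u * e v = f.coeff u * g.coeff v * e v * b v -
        f.coeff u * e v * (g.coeff v * b v - e v) := by
      calc f.coeff u * e v = f.coeff u * (e v * e v) := by rw [(he v).eq]
        _ = f.coeff u * g.coeff v * (b v * e v) - f.coeff u * ((g.coeff v * b v - e v) * e v) := by
          noncomm_ring
        _ = _ := by rw [← hec v (b v), ← hec v (g.coeff v * b v - e v)]; noncomm_ring
    rw [hsplit]
    exact sub_mem (Ideal.mul_mem_right _ _ hterm) (Ideal.mul_mem_mul (ih v hv u) (hb v))

end HahnSeries

theorem hahnSeries_left_mccoy_general (Γ R : Type*)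
    [AddCommMonoid Γ] [LinearOrder Γ] [IsOrderedCancelAddMonoid Γ] [Ring R]
    (hab : IsAbelianRing R) (hsr : IsSemiregularRing R) (hnil : JacobsonNilpotent R)
    (f g : HahnSeries Γ R) (hf : f ≠ 0) (hfg : f * g = 0) :
    ∃ c : R, c ≠ 0 ∧ ∀ s : Γ, c * g.coeff s = 0 := by
  obtain ⟨n, -, hn⟩ := hnil
  have hJ : (⊥ : Ideal R).jacobson ^ n = ⊥ := Ideal.pow_eq_bot_of_list_prod_eq_zero hn
  choose e b he hb hg using fun v => hsr.exists_isIdempotentElem_s9 (g.coeff v)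
  have hec : ∀ v a, e v * a = a * e v := fun v => hab (e v) (he v)
  have hfe : ∀ u, ∀ v ∈ g.support, f.coeff u * e v = 0 := fun u v hv => by
    simpa [hJ] using HahnSeries.coeff_mul_mem_pow_of_mul_eq_zero hfg _ he hec hb hg n v hv u
  obtain ⟨u, hu⟩ := HahnSeries.support_nonempty_iff.2 hf
  obtain ⟨x, hx, hxJ⟩ := Ideal.exists_mul_ne_zero_forall_mul_mul_eq_zero hJ hu
  refine ⟨f.coeff u * x, hx, fun s => ?_⟩
  by_cases hs : g.coeff s = 0
  · rw [hs, mul_zero]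
  · calc f.coeff u * x * g.coeff s
        = f.coeff u * e s * (x * g.coeff s) + f.coeff u * x * (g.coeff s - e s * g.coeff s) := by
          rw [mul_sub, mul_assoc (f.coeff u) (e s), ← mul_assoc (e s), hec s x]
          noncomm_ring
      _ = 0 := by rw [hfe u s ((g.mem_support s).2 hs), hxJ _ (hg s), zero_mul, zero_add]

/-- Let `Γ` be a linearly ordered, cancellative, strictly monotone additive commutative
monoid and `R` an abelian semi-regular ring with `J(R)` nilpotent.  Then the Hahn series
ring `R[[Γ]]` is left McCoy over `R`: if `f * g = 0` with `f, g ≠ 0`, then some non-zero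
`c ∈ R` annihilates every coefficient of `g` on the left. -/
theorem hahnSeries_left_mccoy (Γ R : Type*)
    [AddCommMonoid Γ] [LinearOrder Γ] [IsOrderedCancelAddMonoid Γ] [Ring R]
    (hab : IsAbelianRing R) (hsr : IsSemiregularRing R) (hnil : JacobsonNilpotent R)
    (f g : HahnSeries Γ R) (hf : f ≠ 0) (hg : g ≠ 0) (hfg : f * g = 0) :
    ∃ c : R, c ≠ 0 ∧ ∀ s : Γ, c * g.coeff s = 0 :=
  hahnSeries_left_mccoy_general Γ R hab hsr hnil f g hf hfg
end

section
/- Let R be an abelian semi-regular ring with J(R) nilpotent. Then the Laurent series ring R[[x, x⁻¹]] is McCoy over R: whenever f, g are non-zero formal Laurent series over R with f g = 0, there exists a non-zero element c ∈ R with f · c = 0, and there exists a non-zero element d ∈ R with d · g = 0. -/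
section
variable {R : Type*} [Ring R]

/-- Modulo `N`, the left ideal `R a` is generated by the central idempotent `e`. -/
structure IsCentralIdempotentGenerator (N : Ideal R) (a e : R) : Prop where
  isIdempotentElem : IsIdempotentElem e
  mul_comm : ∀ r, e * r = r * e
  exists_sub_mul_mem : ∃ b, e - b * a ∈ N
  sub_mul_mem : a - e * a ∈ N

namespace IsCentralIdempotentGenerator

variable {N I : Ideal R} {a e x : R}

theorem mul_mem_of_mul_mem (he : IsCentralIdempotentGenerator N a e)
    (hx : ∀ y ∈ N, y * x ∈ I) (h : e * x ∈ I) : a * x ∈ I := by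
  have : a * x = a * (e * x) + (a - e * a) * x := by
    rw [← mul_assoc, ← he.mul_comm a]; noncomm_ring
  rw [this]
  exact add_mem (I.mul_mem_left _ h) (hx _ he.sub_mul_mem)

theorem mul_mem_of_mul_mul_mem (he : IsCentralIdempotentGenerator N a e)
    (hx : ∀ y ∈ N, y * x ∈ I) (h : e * (a * x) ∈ I) : e * x ∈ I := by
  obtain ⟨b, hb⟩ := he.exists_sub_mul_mem
  have : e * x = b * (e * (a * x)) + e * ((e - b * a) * x) := by
    calc e * x = e * e * x := by rw [he.isIdempotentElem.eq]
      _ = (b * e) * a * x + e * ((e - b * a) * x) := by rw [← he.mul_comm b]; noncomm_ring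
      _ = _ := by noncomm_ring
  rw [this]
  exact add_mem (I.mul_mem_left _ h) (I.mul_mem_left _ (hx _ hb))

end IsCentralIdempotentGenerator

-- the factor `r` makes this a left ideal
def annihilatorPow (N : Ideal R) (k : ℕ) : Ideal R where
  carrier := {x | ∀ l : List R, l.length = k → (∀ y ∈ l, y ∈ N) → ∀ r, l.prod * r * x = 0}
  add_mem' hx hy l hl hlN r := by rw [mul_add, hx l hl hlN r, hy l hl hlN r, add_zero]
  zero_mem' _ _ _ _ := mul_zero _
  smul_mem' s x hx l hl hlN r := by rw [smul_eq_mul, ← mul_assoc, mul_assoc _ r, hx l hl hlN]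

variable {N : Ideal R}

theorem annihilatorPow_zero : annihilatorPow N 0 = ⊥ := by
  refine eq_bot_iff.2 fun x hx => ?_
  simpa using hx [] rfl (by simp) 1

theorem annihilatorPow_eq_top {m : ℕ}
    (hnil : ∀ l : List R, l.length = m → (∀ y ∈ l, y ∈ N) → l.prod = 0) :
    annihilatorPow N m = ⊤ :=
  eq_top_iff.2 fun x _ l hl hlN r => by rw [hnil l hl hlN, zero_mul, zero_mul]

theorem mul_mem_annihilatorPow {k : ℕ} {x y : R} (hy : y ∈ N)
    (hx : x ∈ annihilatorPow N (k + 1)) : y * x ∈ annihilatorPow N k := by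
  intro l hl hlN r
  have hlN' : ∀ z ∈ l ++ [r * y], z ∈ N := by
    simpa [or_imp, forall_and] using ⟨hlN, N.mul_mem_left r hy⟩
  simpa [mul_assoc] using hx (l ++ [r * y]) (by simp [hl]) hlN' 1

theorem HahnSeries.mul_coeff_mem_of_mul_eq_zero {I : Ideal R} {f h : HahnSeries ℤ R}
    (hfh : f * h = 0) {e : ℤ → R} (he : ∀ i r, e i * r = r * e i)
    (hcoeff : ∀ i j, e i * h.coeff j ∈ I → f.coeff i * h.coeff j ∈ I)
    (hidem : ∀ i j, e i * (f.coeff i * h.coeff j) ∈ I → e i * h.coeff j ∈ I) (i j : ℤ) :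
    e i * h.coeff j ∈ I := by
  by_cases hfi : f.coeff i = 0
  · exact hidem i j (by simp [hfi])
  by_cases hhj : h.coeff j = 0
  · simp [hhj]
  have hfo := order_le_of_coeff_ne_zero hfi
  have hho := order_le_of_coeff_ne_zero hhj
  apply hidem
  have hfh_coeff : (f * h).coeff (i + j) = 0 := by rw [hfh, coeff_zero]
  rw [coeff_mul] at hfh_coeff
  set A := Finset.antidiagonal f.isPWO_support h.isPWO_support (i + j)
  have hij : (i, j) ∈ A := Finset.mem_antidiagonal.2 ⟨hfi, hhj, rfl⟩
  have hsum : ∑ p ∈ A, e i * (f.coeff p.1 * h.coeff p.2) = 0 := by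
    rw [← Finset.mul_sum, hfh_coeff, mul_zero]
  -- Terms `f_p h_q` with `p < i` lie in `I` by induction on `i` for the same `i + j`; those
  -- with `p > i` because `e i` is central and `i + q < i + j`.
  have hrest : ∀ p ∈ A.erase (i, j), e i * (f.coeff p.1 * h.coeff p.2) ∈ I := by
    intro p hp
    obtain ⟨hp1, hp2, hpij⟩ := Finset.mem_antidiagonal.1 (Finset.mem_of_mem_erase hp)
    have := order_le_of_coeff_ne_zero hp1
    have := order_le_of_coeff_ne_zero hp2
    rcases lt_trichotomy p.1 i with hlt | heq | hgt
    · exact I.mul_mem_left _ (hcoeff _ _ (mul_coeff_mem_of_mul_eq_zero hfh he hcoeff hidem p.1 p.2))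
    · exact absurd (Prod.ext heq (by omega)) (Finset.ne_of_mem_erase hp)
    · rw [← mul_assoc, he, mul_assoc]
      exact I.mul_mem_left _ (mul_coeff_mem_of_mul_eq_zero hfh he hcoeff hidem i p.2)
  rw [← Finset.add_sum_erase A _ hij, add_eq_zero_iff_eq_neg] at hsum
  rw [hsum]
  exact I.neg_mem (I.sum_mem hrest)
termination_by ((i + j - (f.order + h.order)).toNat, (i - f.order).toNat)
decreasing_by
  · apply Prod.Lex.right' <;> omega
  · apply Prod.Lex.left; omega

open HahnSeries in
theorem exists_ne_zero_forall_coeff_mul_eq_zero {N : Ideal R} {m : ℕ}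
    (hnil : ∀ l : List R, l.length = m → (∀ y ∈ l, y ∈ N) → l.prod = 0)
    {f g : HahnSeries ℤ R} (e : ℤ → R) (he : ∀ n, IsCentralIdempotentGenerator N (f.coeff n) (e n))
    (hg : g ≠ 0) (hfg : f * g = 0) :
    ∃ c : R, c ≠ 0 ∧ ∀ n : ℤ, f.coeff n * c = 0 := by
  classical
  let P (k : ℕ) : Prop :=
    ∃ h : HahnSeries ℤ R, h ≠ 0 ∧ f * h = 0 ∧ ∀ j, h.coeff j ∈ annihilatorPow N k
  have hP : ∃ k, P k := ⟨m, g, hg, hfg, by simp [annihilatorPow_eq_top hnil]⟩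
  obtain ⟨h, hh, hfh, hhk⟩ := Nat.find_spec hP
  obtain ⟨k, hk⟩ : ∃ k, Nat.find hP = k + 1 := by
    refine Nat.exists_eq_succ_of_ne_zero fun h0 => hh ?_
    ext j
    simpa [h0, annihilatorPow_zero] using hhk j
  have hmin : ¬ P k := Nat.find_min hP (by omega)
  rw [hk] at hhk
  have hNh : ∀ j, ∀ y ∈ N, y * h.coeff j ∈ annihilatorPow N k :=
    fun j y hy => mul_mem_annihilatorPow hy (hhk j)
  -- `h * e i` annihilates `f` and has coefficients in `annihilatorPow N k`: minimality kills it
  have heh : ∀ i j, e i * h.coeff j = 0 := by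
    intro i j
    have hmem := mul_coeff_mem_of_mul_eq_zero hfh (fun i => (he i).mul_comm)
      (fun i j => (he i).mul_mem_of_mul_mem (hNh j))
      (fun i j => (he i).mul_mem_of_mul_mul_mem (hNh j)) i
    have : h * single 0 (e i) = 0 := by
      by_contra hne
      refine hmin ⟨_, hne, by rw [← mul_assoc, hfh, zero_mul], fun j => ?_⟩
      rw [coeff_mul_single_zero, ← (he i).mul_comm]
      exact hmem j
    simpa [(he i).mul_comm] using congrArg (coeff · j) this
  obtain ⟨j, hj⟩ : ∃ j, h.coeff j ∉ annihilatorPow N k := by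
    by_contra! hj
    exact hmin ⟨h, hh, hfh, hj⟩
  obtain ⟨l, hl, hlN, r, hc⟩ : ∃ l : List R, l.length = k ∧ (∀ y ∈ l, y ∈ N) ∧
      ∃ r, l.prod * r * h.coeff j ≠ 0 := by
    simpa [annihilatorPow] using hj
  refine ⟨_, hc, fun n => ?_⟩
  refine (he n).mul_mem_of_mul_mem (I := ⊥) (fun y hy => ?_) ?_
  · have := hhk j (y :: l) (by simp [hl]) (by simpa using ⟨hy, hlN⟩) r
    simpa [mul_assoc] using this
  · rw [Ideal.mem_bot, ← mul_assoc, (he n).mul_comm, mul_assoc, heh, mul_zero]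

theorem IsSemiregularRing.exists_central_lift (hab : IsAbelianRing R) (hsr : IsSemiregularRing R)
    {x : R} (hx : x * x - x ∈ (⊥ : Ideal R).jacobson) :
    ∃ e, IsIdempotentElem e ∧ (∀ r, e * r = r * e) ∧ e - x ∈ (⊥ : Ideal R).jacobson := by
  obtain ⟨e, he, hex⟩ := hsr.2 x hx
  exact ⟨e, he, hab e he, hex⟩

theorem IsSemiregularRing.exists_isCentralIdempotentGenerator (hab : IsAbelianRing R)
    (hsr : IsSemiregularRing R) (a : R) :
    ∃ e, IsCentralIdempotentGenerator (⊥ : Ideal R).jacobson a e := by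
  obtain ⟨b, hb⟩ := hsr.1 a
  obtain ⟨e, he, hc, hex⟩ := hsr.exists_central_lift hab (x := b * a) <| by
    rw [show b * a * (b * a) - b * a = -(b * (a - a * b * a)) by noncomm_ring]
    exact neg_mem ((⊥ : Ideal R).jacobson.mul_mem_left b hb)
  refine ⟨e, he, hc, ⟨b, hex⟩, ?_⟩
  rw [show a - e * a = (a - a * b * a) - a * (e - b * a) by rw [hc a]; noncomm_ring]
  exact sub_mem hb ((⊥ : Ideal R).jacobson.mul_mem_left a hex)

theorem IsSemiregularRing.exists_isCentralIdempotentGenerator_op (hab : IsAbelianRing R)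
    (hsr : IsSemiregularRing R) (a : Rᵐᵒᵖ) :
    ∃ e, IsCentralIdempotentGenerator
      (TwoSidedIdeal.asIdealOpposite (⊥ : Ideal R).jacobson.toTwoSided) a e := by
  obtain ⟨b, hb⟩ := hsr.1 a.unop
  obtain ⟨e, he, hc, hex⟩ := hsr.exists_central_lift hab (x := a.unop * b) <| by
    rw [show a.unop * b * (a.unop * b) - a.unop * b = (a.unop * b * a.unop - a.unop) * b by
      noncomm_ring]
    exact (⊥ : Ideal R).jacobson.mul_mem_right b (by simpa using neg_mem hb)
  refine ⟨.op e, ?_, fun r => ?_, ⟨.op b, ?_⟩, ?_⟩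
  · exact congrArg MulOpposite.op he.eq
  · exact congrArg MulOpposite.op (hc r.unop).symm
  · simpa [TwoSidedIdeal.mem_asIdealOpposite] using hex
  · simp only [TwoSidedIdeal.mem_asIdealOpposite, Ideal.mem_toTwoSided, MulOpposite.unop_sub,
      MulOpposite.unop_mul, MulOpposite.unop_op]
    rw [show a.unop - a.unop * e = (a.unop - a.unop * b * a.unop) - (e - a.unop * b) * a.unop by
      rw [← hc a.unop]; noncomm_ring]
    exact sub_mem hb ((⊥ : Ideal R).jacobson.mul_mem_right _ hex)

end

open MulOpposite in
theorem HahnSeries.map_op_mul {Γ R : Type*} [AddCommMonoid Γ] [PartialOrder Γ]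
    [IsOrderedCancelAddMonoid Γ] [Semiring R] (x y : HahnSeries Γ R) :
    (x * y).map (opAddEquiv : R ≃+ Rᵐᵒᵖ) = y.map opAddEquiv * x.map opAddEquiv := by
  ext a
  simp only [map_coeff, coeff_mul, map_sum, opAddEquiv_apply, op_mul]
  exact Finset.sum_equiv (Equiv.prodComm _ _) (fun _ ↦ by simp [and_left_comm, add_comm]) (by simp)

theorem list_prod_eq_zero_op {M : Type*} [MonoidWithZero M] {p : M → Prop} {m : ℕ}
    (h : ∀ l : List M, l.length = m → (∀ x ∈ l, p x) → l.prod = 0) :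
    ∀ l : List Mᵐᵒᵖ, l.length = m → (∀ x ∈ l, p x.unop) → l.prod = 0 := by
  intro l hl hp
  apply MulOpposite.unop_injective
  rw [MulOpposite.unop_list_prod, MulOpposite.unop_zero]
  exact h _ (by simp [hl]) (by simpa using hp)

/-- Let `R` be an abelian semi-regular ring with `J(R)` nilpotent.  Then the Laurent series
ring `R[[x, x⁻¹]]` (Hahn series over `ℤ`) is McCoy over `R`: if `f * g = 0` with `f, g ≠ 0`,
then some non-zero `c ∈ R` annihilates `f` on the right and some non-zero `d ∈ R`
annihilates `g` on the left. -/
theorem laurentSeries_mccoy (R : Type*) [Ring R]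
    (hab : IsAbelianRing R) (hsr : IsSemiregularRing R) (hnil : JacobsonNilpotent R)
    (f g : HahnSeries ℤ R) (hf : f ≠ 0) (hg : g ≠ 0) (hfg : f * g = 0) :
    (∃ c : R, c ≠ 0 ∧ ∀ n : ℤ, f.coeff n * c = 0) ∧
    (∃ d : R, d ≠ 0 ∧ ∀ n : ℤ, d * g.coeff n = 0) := by
  obtain ⟨m, -, hnil⟩ := hnil
  constructor
  · choose e he using hsr.exists_isCentralIdempotentGenerator hab
    exact exists_ne_zero_forall_coeff_mul_eq_zero hnil _ (fun n => he (f.coeff n)) hg hfg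
  · choose e he using hsr.exists_isCentralIdempotentGenerator_op hab
    have hnil_op := list_prod_eq_zero_op hnil
    simp only [← TwoSidedIdeal.mem_asIdealOpposite, ← Ideal.mem_toTwoSided] at hnil_op
    have hf_op : f.map MulOpposite.opAddEquiv ≠ 0 :=
      fun h0 => hf (by ext n; simpa using congrArg (·.coeff n) h0)
    have hgf_op : g.map MulOpposite.opAddEquiv * f.map MulOpposite.opAddEquiv = 0 := by
      rw [← HahnSeries.map_op_mul, hfg]; ext; simp
    obtain ⟨d, hd, hgd⟩ :=
      exists_ne_zero_forall_coeff_mul_eq_zero hnil_op _ (fun n => he _) hf_op hgf_op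
    exact ⟨d.unop, by simpa using hd, fun n => by simpa using congrArg MulOpposite.unop (hgd n)⟩
end

section
/- Let R be an abelian semi-regular ring with J(R) nilpotent. Then the formal power series ring R[[x]] is right power series-wise McCoy: whenever f, g are non-zero formal power series in R[[x]] with f g = 0, there exists a non-zero element c ∈ R such that f · c = 0 (i.e., every coefficient of f annihilates c on the right). -/
/-!
Modulo `J = J(R)` every coefficient `a_p` of `f` factors as `u_p e_p` with `u_p` a unit and `e_p` a
central idempotent: lift `a s` (where `a - a s a ∈ J`) to an idempotent `e` and take
`u = a e + (1 - e)`; since an abelian ring is Dedekind-finite, the right inverse of `u` modulo `J`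
makes `u` a unit.

Let `A_k = {w | J^k w = 0}`, so that `A_0 = 0` and, `J` being nilpotent, every coefficient of `g`
lies in `A_m`. If all of them lie in `A_{k+1}`, comparing coefficients of `e_p f g = 0` by
induction on `(p + q, p)` gives `e_p g_q ∈ A_k`. If some `e_p g ≠ 0`, then `e_p g` is still
killed by `f` and one step lower in the filtration. Otherwise pick `g_q ≠ 0` and a nonzero
`c ∈ R g_q` with `J c = 0`; then `a_p c = u_p e_p c = 0` for every `p`.
-/

section

variable {R : Type*} [Ring R]

theorem IsAbelianRing.isDedekindFiniteMonoid (hab : IsAbelianRing R) :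
    IsDedekindFiniteMonoid R where
  mul_eq_one_symm {a b} h := by
    have hidem : IsIdempotentElem (b * a) := by
      rw [IsIdempotentElem, mul_assoc, ← mul_assoc a, h, one_mul]
    have hba : b * a * a = a := by
      rw [hab _ hidem, ← mul_assoc, h, one_mul]
    calc b * a = b * a * (a * b) := by rw [h, mul_one]
      _ = 1 := by rw [← mul_assoc, hba, h]

theorem isUnit_of_sub_one_mem_jacobson_bot_of_isDedekindFinite [IsDedekindFiniteMonoid R] {r : R}
    (h : r - 1 ∈ (⊥ : Ideal R).jacobson) : IsUnit r := by
  obtain ⟨s, hs⟩ := Ideal.exists_mul_sub_mem_of_sub_one_mem_jacobson r h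
  rw [Ideal.mem_bot, sub_eq_zero] at hs
  exact .of_mul_eq_one_right s hs

theorem IsIdempotentElem.mul_add_one_sub_mul_mul_add_one_sub {e : R} (he : IsIdempotentElem e)
    (hc : ∀ b, Commute e b) (x y : R) :
    (x * e + (1 - e)) * (y * e + (1 - e)) = x * y * e + (1 - e) := by
  have hy : x * e * (y * e) = x * y * e := by
    rw [mul_assoc x, ← mul_assoc e, (hc y).eq, mul_assoc y, he.eq, mul_assoc]
  have hxe : x * e * (1 - e) = 0 := by rw [mul_sub, mul_one, mul_assoc, he.eq, sub_self]
  have hey : (1 - e) * (y * e) = 0 := by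
    rw [← (hc _).eq, ← mul_assoc, sub_mul, one_mul, he.eq, sub_self, zero_mul]
  have hee : (1 - e) * (1 - e) = 1 - e := he.one_sub.eq
  rw [mul_add, add_mul, add_mul, hy, hxe, hey, hee, add_zero, zero_add]

theorem exists_isUnit_mul_idempotent_sub_mem_jacobson (hab : IsAbelianRing R)
    (hsr : IsSemiregularRing R) (a : R) :
    ∃ u e : R, IsUnit u ∧ IsIdempotentElem e ∧ (∀ b, Commute e b) ∧
      a - u * e ∈ (⊥ : Ideal R).jacobson := by
  have := hab.isDedekindFiniteMonoid
  set J := (⊥ : Ideal R).jacobson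
  obtain ⟨s, hs⟩ := hsr.1 a
  have has : a * s * (a * s) - a * s ∈ J := by
    rw [show a * s * (a * s) - a * s = -((a - a * s * a) * s) by noncomm_ring]
    exact neg_mem (J.mul_mem_right s hs)
  obtain ⟨e, he, hes⟩ := hsr.2 (a * s) has
  have hc : ∀ b, Commute e b := hab e he
  refine ⟨a * e + (1 - e), e, ?_, he, hc, ?_⟩
  · have huv : (a * e + (1 - e)) * (s * e + (1 - e)) - 1 ∈ J := by
      rw [he.mul_add_one_sub_mul_mul_add_one_sub hc,
        show a * s * e + (1 - e) - 1 = -((e - a * s) * e) by rw [sub_mul, he.eq]; abel]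
      exact neg_mem (J.mul_mem_right e hes)
    obtain ⟨w, hw⟩ := isUnit_of_sub_one_mem_jacobson_bot_of_isDedekindFinite huv
    exact .of_mul_eq_one (_ * ↑w⁻¹) (by rw [← mul_assoc, ← hw, w.mul_inv])
  · rw [add_mul, sub_mul, one_mul, mul_assoc, he.eq, sub_self, add_zero, ← (hc a).eq,
      show a - e * a = (a - a * s * a) - (e - a * s) * a by noncomm_ring]
    exact sub_mem hs (J.mul_mem_right a hes)

namespace Ideal

variable (J : Ideal R) [J.IsTwoSided]

/-- The left ideal of elements `w` with `J ^ k * w = 0`. -/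
def annihPow : ℕ → Ideal R
  | 0 => ⊥
  | k + 1 =>
    { carrier := {w | ∀ z ∈ J, z * w ∈ annihPow k}
      add_mem' := fun ha hb z hz => by rw [mul_add]; exact add_mem (ha z hz) (hb z hz)
      zero_mem' := fun z _ => by rw [mul_zero]; exact zero_mem _
      smul_mem' := fun r w hw z hz => by
        rw [smul_eq_mul, ← mul_assoc]; exact hw _ (J.mul_mem_right r hz) }

variable {J}

theorem mem_annihPow_zero {w : R} : w ∈ J.annihPow 0 ↔ w = 0 := Submodule.mem_bot R

theorem mem_annihPow_succ {k : ℕ} {w : R} :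
    w ∈ J.annihPow (k + 1) ↔ ∀ z ∈ J, z * w ∈ J.annihPow k := Iff.rfl

theorem mem_annihPow_one {w : R} : w ∈ J.annihPow 1 ↔ ∀ z ∈ J, z * w = 0 := by
  simp only [mem_annihPow_succ, mem_annihPow_zero]

theorem mem_annihPow_of_forall_list_prod_mul_eq_zero {k : ℕ} {w : R}
    (h : ∀ l : List R, l.length = k → (∀ x ∈ l, x ∈ J) → l.prod * w = 0) :
    w ∈ J.annihPow k := by
  induction k generalizing w with
  | zero => simpa [mem_annihPow_zero] using h [] rfl (by simp)
  | succ k ih =>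
    refine mem_annihPow_succ.mpr fun z hz => ih fun l hl hlJ => ?_
    have hlz := h (l ++ [z]) (by simp [hl]) (by simpa [or_imp, forall_and] using ⟨hlJ, hz⟩)
    rwa [List.prod_append, List.prod_singleton, mul_assoc] at hlz

theorem exists_mul_ne_zero_mem_annihPow_one {k : ℕ} {w : R} (hw : w ∈ J.annihPow k)
    (hw0 : w ≠ 0) : ∃ y, y * w ≠ 0 ∧ y * w ∈ J.annihPow 1 := by
  induction k generalizing w with
  | zero => exact absurd (mem_annihPow_zero.mp hw) hw0
  | succ k ih =>
    by_cases hJw : w ∈ J.annihPow 1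
    · exact ⟨1, by rwa [one_mul], by rwa [one_mul]⟩
    · obtain ⟨z, hz, hzw⟩ : ∃ z ∈ J, z * w ≠ 0 := by
        simpa [mem_annihPow_succ, mem_annihPow_zero] using hJw
      obtain ⟨y, hy0, hy⟩ := ih (mem_annihPow_succ.mp hw z hz) hzw
      exact ⟨y * z, by rwa [mul_assoc], by rwa [mul_assoc]⟩

end Ideal

namespace PowerSeries

open Finset

variable {f g : R⟦X⟧} {u e : ℕ → R}

theorem idempotent_mul_coeff_mem_of_forall_ne {K : Ideal R} {p : ℕ} (hfg : f * g = 0)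
    (hu : IsUnit (u p)) (he : IsIdempotentElem (e p)) (hc : ∀ b, Commute (e p) b)
    (hK : ∀ i j, (coeff i f - u i * e i) * coeff j g ∈ K) {n q : ℕ} (hpq : p + q = n)
    (hoff : ∀ i j, i + j = n → i ≠ p → e p * (e i * coeff j g) ∈ K) :
    e p * coeff q g ∈ K := by
  have hterm : ∀ i j, e p * (coeff i f * coeff j g) =
      u i * (e p * (e i * coeff j g)) + e p * ((coeff i f - u i * e i) * coeff j g) := by
    intro i j
    rw [← (hc _).left_comm, ← mul_add, sub_mul, mul_assoc, add_sub_cancel]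
  have hsum : ∑ ij ∈ antidiagonal n, e p * (coeff ij.1 f * coeff ij.2 g) = 0 := by
    rw [← mul_sum, ← coeff_mul, hfg, map_zero, mul_zero]
  have hpq' : (p, q) ∈ antidiagonal n := mem_antidiagonal.mpr hpq
  have hdiag : e p * (coeff p f * coeff q g) ∈ K := by
    rw [← add_sum_erase _ _ hpq', add_eq_zero_iff_eq_neg] at hsum
    rw [hsum]
    refine neg_mem (sum_mem fun ij hij => ?_)
    obtain ⟨hne, hij⟩ := mem_erase.mp hij
    have hij := mem_antidiagonal.mp hij
    rw [hterm]
    refine add_mem (K.mul_mem_left _ (hoff _ _ hij fun h => hne ?_)) (K.mul_mem_left _ (hK _ _))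
    exact Prod.ext h (by omega)
  rw [hterm, ← mul_assoc (e p), he.eq] at hdiag
  exact (K.unit_mul_mem_iff_mem hu).mp
    ((K.add_mem_iff_left (K.mul_mem_left _ (hK _ _))).mp hdiag)

theorem idempotent_mul_coeff_mem {K : Ideal R} (hfg : f * g = 0) (hu : ∀ p, IsUnit (u p))
    (he : ∀ p, IsIdempotentElem (e p)) (hc : ∀ p b, Commute (e p) b)
    (hK : ∀ i j, (coeff i f - u i * e i) * coeff j g ∈ K) (p q : ℕ) :
    e p * coeff q g ∈ K := by
  suffices ∀ n p q, p + q = n → e p * coeff q g ∈ K from this _ p q rfl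
  intro n
  induction n using Nat.strong_induction_on with | _ n ihn => ?_
  intro p
  induction p using Nat.strong_induction_on with | _ p ihp => ?_
  intro q hpq
  refine idempotent_mul_coeff_mem_of_forall_ne hfg (hu p) (he p) (hc p) hK hpq
    fun i j hij hip => ?_
  rcases hip.lt_or_gt with hip | hip
  · exact K.mul_mem_left _ (ihp i hip j (by omega))
  · rw [(hc p _).left_comm]
    exact K.mul_mem_left _ (ihn (p + j) (by omega) p j rfl)

theorem exists_ne_zero_forall_coeff_mul_eq_zero {J : Ideal R} [J.IsTwoSided]
    (hu : ∀ p, IsUnit (u p)) (he : ∀ p, IsIdempotentElem (e p)) (hc : ∀ p b, Commute (e p) b)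
    (hJ : ∀ p, coeff p f - u p * e p ∈ J) {k : ℕ} (hfg : f * g = 0) (hg : g ≠ 0)
    (hgk : ∀ q, coeff q g ∈ J.annihPow k) : ∃ c ≠ 0, ∀ p, coeff p f * c = 0 := by
  induction k generalizing g with
  | zero => exact absurd (ext fun q => by simpa [Ideal.mem_annihPow_zero] using hgk q) hg
  | succ k ih =>
    by_cases hE : ∃ p q, e p * coeff q g ≠ 0
    · obtain ⟨p, q, hpq⟩ := hE
      have hfe : f * C (e p) = C (e p) * f := ext fun n => by
        rw [coeff_mul_C, coeff_C_mul, (hc p _).eq]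
      refine ih (g := C (e p) * g) ?_ (fun h => hpq ?_) fun q' => ?_
      · rw [← mul_assoc, hfe, mul_assoc, hfg, mul_zero]
      · rw [← coeff_C_mul, h, map_zero]
      · rw [coeff_C_mul]
        exact idempotent_mul_coeff_mem hfg hu he hc
          (fun i j => Ideal.mem_annihPow_succ.mp (hgk j) _ (hJ i)) p q'
    · push Not at hE
      obtain ⟨q, hq⟩ := exists_coeff_ne_zero_iff_ne_zero.mpr hg
      obtain ⟨y, hy0, hy⟩ := Ideal.exists_mul_ne_zero_mem_annihPow_one (hgk q) hq
      refine ⟨y * coeff q g, hy0, fun p => ?_⟩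
      calc coeff p f * (y * coeff q g)
          = u p * (y * (e p * coeff q g)) + (coeff p f - u p * e p) * (y * coeff q g) := by
            rw [← (hc p y).left_comm, ← mul_assoc (u p), ← add_mul, add_sub_cancel]
        _ = 0 := by rw [hE, mul_zero, mul_zero, Ideal.mem_annihPow_one.mp hy _ (hJ p), add_zero]

end PowerSeries

end

theorem powerSeries_right_mccoy_general (R : Type*) [Ring R]
    (hab : IsAbelianRing R) (hsr : IsSemiregularRing R) (hnil : JacobsonNilpotent R)
    (f g : PowerSeries R) (hg : g ≠ 0) (hfg : f * g = 0) :
    ∃ c : R, c ≠ 0 ∧ ∀ n : ℕ, PowerSeries.coeff n f * c = 0 := by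
  obtain ⟨m, -, hm⟩ := hnil
  choose u e hu he hc hJ using
    fun p => exists_isUnit_mul_idempotent_sub_mem_jacobson hab hsr (PowerSeries.coeff p f)
  exact PowerSeries.exists_ne_zero_forall_coeff_mul_eq_zero hu he hc hJ hfg hg fun q =>
    Ideal.mem_annihPow_of_forall_list_prod_mul_eq_zero fun l hl hlJ => by
      rw [hm l hl hlJ, zero_mul]

/-- Let `R` be an abelian semi-regular ring with `J(R)` nilpotent.  Then `R` is right power
series-wise McCoy: if `f * g = 0` in `R[[x]]` with `f, g ≠ 0`, then there is a non-zero
`c ∈ R` with every coefficient of `f` annihilating `c` on the right. -/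
theorem powerSeries_right_mccoy (R : Type*) [Ring R]
    (hab : IsAbelianRing R) (hsr : IsSemiregularRing R) (hnil : JacobsonNilpotent R)
    (f g : PowerSeries R) (hf : f ≠ 0) (hg : g ≠ 0) (hfg : f * g = 0) :
    ∃ c : R, c ≠ 0 ∧ ∀ n : ℕ, PowerSeries.coeff n f * c = 0 :=
  powerSeries_right_mccoy_general R hab hsr hnil f g hg hfg
end
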